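/- arXiv:1005.4284 — 7 statements merged into one kernel-verified Lean document; each statement's English description precedes it below -/
import Mathlib

section
/- Let P be an elementary abelian 2-subgroup of a finite group G and D a subgroup of P with 1 < |D| < |P|. If every subgroup of P of order |D| is normal in G, then every minimal subgroup of P is contained in the center of G. -/
/-!
View `P` as a vector space over `𝔽₂` and let `d = |D|`. If some `g ∈ G` moves `x ∈ P`, then
`g x g⁻¹ ∉ ⟨x⟩ = {1, x}`, so a hyperplane of `P` contains `x` but not `g x g⁻¹`. Since
`d < |P|`, that hyperplane has a subgroup of order `d` through `x`, which is normal by hypothesis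
and so contains `g x g⁻¹`, a contradiction. Hence all of `P` is central.
-/

section ExponentTwo

variable {A : Type*} [Group A]

lemma mul_comm_of_forall_mul_self_eq_one (hA : ∀ a : A, a * a = 1) (a b : A) :
    a * b = b * a := by
  have inv_eq (c : A) : c⁻¹ = c := inv_eq_of_mul_eq_one_right (hA c)
  rw [← inv_eq (a * b), mul_inv_rev, inv_eq, inv_eq]

lemma zpow_eq_one_or_self_of_mul_self_eq_one {a : A} (ha : a * a = 1) (j : ℤ) :
    a ^ j = 1 ∨ a ^ j = a := by
  rw [← Int.emod_add_mul_ediv j 2, zpow_add, zpow_mul, zpow_two, ha, one_zpow, mul_one]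
  rcases Int.emod_two_eq j with h | h <;> simp [h]

/-- A maximal subgroup containing `x` but not `z` has index two: any `b` outside it generates,
together with it, a subgroup containing `z`, so `b` lies in the coset of `z`. -/
lemma exists_mem_notMem_index_eq_two [Finite A] (hA : ∀ a : A, a * a = 1) {x z : A}
    (hzx : z ∉ Subgroup.zpowers x) : ∃ M : Subgroup A, x ∈ M ∧ z ∉ M ∧ M.index = 2 := by
  obtain ⟨M, ⟨hxM, hzM⟩, hmax⟩ := (Set.toFinite {M : Subgroup A | x ∈ M ∧ z ∉ M}).exists_maximal
    ⟨Subgroup.zpowers x, Subgroup.mem_zpowers x, hzx⟩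
  refine ⟨M, hxM, hzM, Subgroup.index_eq_two_iff_exists_notMem_and.2 ⟨z, hzM, fun b => ?_⟩⟩
  by_cases hbM : b ∈ M
  · exact Or.inr hbM
  left
  have : M.Normal := ⟨fun n hn g => by
    rwa [mul_comm_of_forall_mul_self_eq_one hA g n, mul_inv_cancel_right]⟩
  have hz : z ∈ M ⊔ Subgroup.zpowers b := by
    by_contra hz
    exact hbM (hmax ⟨Subgroup.mem_sup_left hxM, hz⟩ le_sup_left
      (Subgroup.mem_sup_right (Subgroup.mem_zpowers b)))
  obtain ⟨m, hm, c, ⟨j, rfl⟩, rfl⟩ := Subgroup.mem_sup_of_normal_left.1 hz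
  rcases zpow_eq_one_or_self_of_mul_self_eq_one (hA b) j with h | h <;> simp only [h] at hzM ⊢
  · exact absurd (by simpa using hm) hzM
  · rwa [mul_comm_of_forall_mul_self_eq_one hA m, ← mul_assoc, hA, one_mul]

end ExponentTwo

lemma IsPGroup.exists_le_le_card_eq {G : Type*} [Group G] [Finite G] {p : ℕ} [hp : Fact p.Prime]
    {H W : Subgroup G} (hW : IsPGroup p W) (hHW : H ≤ W) {m : ℕ} (hH : Nat.card H ≤ p ^ m)
    (hmW : p ^ m ≤ Nat.card W) : ∃ K : Subgroup G, H ≤ K ∧ K ≤ W ∧ Nat.card K = p ^ m := by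
  obtain ⟨n, hn⟩ := (hW.to_le hHW).exists_card_eq
  obtain ⟨l, hl⟩ := hW.exists_card_eq
  have hnm : n ≤ m := (Nat.pow_le_pow_iff_right hp.out.one_lt).1 (hn ▸ hH)
  have hdvd : p ^ m ∣ Nat.card W :=
    hl ▸ pow_dvd_pow p ((Nat.pow_le_pow_iff_right hp.out.one_lt).1 (hl ▸ hmW))
  obtain ⟨K, hK, hHK⟩ := Sylow.exists_subgroup_card_pow_prime_le p hdvd (H.subgroupOf W)
    (by rw [Nat.card_congr (Subgroup.subgroupOfEquivOfLe hHW).toEquiv, hn]) hnm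
  refine ⟨K.map W.subtype, ?_, Subgroup.map_subtype_le K, ?_⟩
  · rw [← inf_of_le_left hHW, ← Subgroup.subgroupOf_map_subtype]
    exact Subgroup.map_mono hHK
  · rw [Subgroup.card_map_of_injective W.subtype_injective, hK]

section ElementaryAbelian

variable {G : Type*} [Group G] {P : Subgroup G}

lemma isPGroup_two_of_forall_mul_self_eq_one (hP : ∀ x ∈ P, x * x = 1) : IsPGroup 2 P :=
  fun x => ⟨1, Subtype.ext (by simpa [sq] using hP x x.2)⟩

lemma exists_le_mem_notMem_card_eq_two_mul [Finite G] (hP : ∀ x ∈ P, x * x = 1) {x z : G}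
    (hx : x ∈ P) (hz : z ∈ P) (hzx : z ∉ Subgroup.zpowers x) :
    ∃ M ≤ P, x ∈ M ∧ z ∉ M ∧ Nat.card P = 2 * Nat.card M := by
  have hzx' : (⟨z, hz⟩ : P) ∉ Subgroup.zpowers ⟨x, hx⟩ := fun ⟨j, hj⟩ =>
    hzx ⟨j, congrArg Subtype.val hj⟩
  obtain ⟨M, hxM, hzM, hM⟩ := exists_mem_notMem_index_eq_two (fun a => Subtype.ext (hP a a.2)) hzx'
  refine ⟨M.map P.subtype, Subgroup.map_subtype_le M, ⟨_, hxM, rfl⟩, ?_, ?_⟩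
  · rintro ⟨w, hwM, hw⟩
    exact hzM ((Subtype.ext hw : w = ⟨z, hz⟩) ▸ hwM)
  · rw [Subgroup.card_map_of_injective P.subtype_injective, ← M.card_mul_index, hM, mul_comm]

lemma exists_le_card_eq_mem [Finite G] (hP : ∀ x ∈ P, x * x = 1) {k : ℕ} (hk : 1 ≤ k)
    {W : Subgroup G} (hWP : W ≤ P) (hkW : 2 ^ k ≤ Nat.card W) {x : G} (hx : x ∈ W) :
    ∃ K ≤ W, Nat.card K = 2 ^ k ∧ x ∈ K := by
  have hxk : Nat.card (Subgroup.zpowers x) ≤ 2 ^ k := by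
    rw [Nat.card_zpowers]
    exact (Nat.le_of_dvd two_pos (orderOf_dvd_of_pow_eq_one (by rw [sq, hP x (hWP hx)]))).trans
      (Nat.le_self_pow (by omega) 2)
  obtain ⟨K, hxK, hKW, hK⟩ :=
    ((isPGroup_two_of_forall_mul_self_eq_one hP).to_le hWP).exists_le_le_card_eq
      (Subgroup.zpowers_le.2 hx) hxk hkW
  exact ⟨K, hKW, hK, hxK (Subgroup.mem_zpowers x)⟩

lemma exists_le_card_eq_mem_notMem [Finite G] (hP : ∀ x ∈ P, x * x = 1) {k : ℕ} (hk : 1 ≤ k)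
    (hkP : 2 ^ k < Nat.card P) {x z : G} (hx : x ∈ P) (hz : z ∈ P)
    (hzx : z ∉ Subgroup.zpowers x) : ∃ K ≤ P, Nat.card K = 2 ^ k ∧ x ∈ K ∧ z ∉ K := by
  obtain ⟨M, hMP, hxM, hzM, hPM⟩ := exists_le_mem_notMem_card_eq_two_mul hP hx hz hzx
  obtain ⟨j, hj⟩ := ((isPGroup_two_of_forall_mul_self_eq_one hP).to_le hMP).exists_card_eq
  have hkM : 2 ^ k ≤ Nat.card M := by
    rw [hPM, hj, ← pow_succ'] at hkP
    rw [hj]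
    exact Nat.pow_le_pow_right two_pos
      (Nat.lt_succ_iff.1 ((Nat.pow_lt_pow_iff_right one_lt_two).1 hkP))
  obtain ⟨K, hKM, hK, hxK⟩ := exists_le_card_eq_mem hP hk hMP hkM hxM
  exact ⟨K, hKM.trans hMP, hK, hxK, fun hzK => hzM (hKM hzK)⟩

lemma le_center_of_forall_card_eq_normal [Finite G] (hP : ∀ x ∈ P, x * x = 1) {k : ℕ}
    (hk : 1 ≤ k) (hkP : 2 ^ k < Nat.card P)
    (hnorm : ∀ H ≤ P, Nat.card H = 2 ^ k → H.Normal) : P ≤ Subgroup.center G := by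
  intro x hx
  refine Subgroup.mem_center_iff.2 fun g => mul_inv_eq_iff_eq_mul.1 ?_
  have hconj {K : Subgroup G} (hKP : K ≤ P) (hK : Nat.card K = 2 ^ k) (hxK : x ∈ K) :
      g * x * g⁻¹ ∈ K :=
    (hnorm K hKP hK).conj_mem x hxK g
  obtain ⟨K, hKP, hK, hxK⟩ := exists_le_card_eq_mem hP hk le_rfl hkP.le hx
  have hzx : g * x * g⁻¹ ∈ Subgroup.zpowers x := by
    by_contra hzx
    obtain ⟨L, hLP, hL, hxL, hzL⟩ :=
      exists_le_card_eq_mem_notMem hP hk hkP hx (hKP (hconj hKP hK hxK)) hzx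
    exact hzL (hconj hLP hL hxL)
  obtain ⟨j, hj⟩ := Subgroup.mem_zpowers_iff.1 hzx
  rcases zpow_eq_one_or_self_of_mul_self_eq_one (hP x hx) j with h | h
  · obtain rfl : x = 1 := by simpa [h] using hj.symm
    simp
  · rw [← hj, h]

end ElementaryAbelian

theorem stmt6_general {G : Type*} [Group G] [Finite G] (P : Subgroup G)
    (helem : ∀ x ∈ P, x * x = 1)
    (D : Subgroup G) (hDP : D ≤ P) (hD1 : 1 < Nat.card D)
    (hDlt : Nat.card D < Nat.card P)
    (hnorm : ∀ H : Subgroup G, H ≤ P → Nat.card H = Nat.card D → H.Normal) :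
    ∀ H : Subgroup G, H ≤ P → (Nat.card H).Prime → H ≤ Subgroup.center G := by
  obtain ⟨k, hk⟩ := ((isPGroup_two_of_forall_mul_self_eq_one helem).to_le hDP).exists_card_eq
  have hk1 : 1 ≤ k := Nat.one_le_iff_ne_zero.2 (by rintro rfl; simp [hk] at hD1)
  have hPZ := le_center_of_forall_card_eq_normal helem hk1 (hk ▸ hDlt) (hk ▸ hnorm)
  exact fun H hHP _ => hHP.trans hPZ

theorem stmt6 {G : Type*} [Group G] [Finite G] (P : Subgroup G)
    (hP2 : IsPGroup 2 P) (helem : ∀ x ∈ P, x * x = 1)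
    (D : Subgroup G) (hDP : D ≤ P) (hD1 : 1 < Nat.card D)
    (hDlt : Nat.card D < Nat.card P)
    (hnorm : ∀ H : Subgroup G, H ≤ P → Nat.card H = Nat.card D → H.Normal) :
    ∀ H : Subgroup G, H ≤ P → (Nat.card H).Prime → H ≤ Subgroup.center G :=
  stmt6_general P helem D hDP hD1 hDlt hnorm
end

section
/- Let A be a finite group of odd order acting by automorphisms on a finite 2-group P. If A fixes (centralizes) every element of order 2 and every element of order 4 in P, then A acts trivially on P. -/
/-!
By induction on `|P|` we may assume that `A` acts trivially on every proper `A`-invariant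
subgroup. If `a` fixes `z = g⁻¹ (a • g)` then `a^k • g = g z^k`, so `z^|A| = 1` and `z = 1` since
`|A|` is odd; hence `A` cannot centralize `[P, A]`, which must therefore be all of `P`. The
subgroup `N` generated by the squares is proper and characteristic, so `A` centralizes it, and
then `[P, A] = P` centralizes the normal subgroup `N`. Now `a` fixes `g²`, so `g` inverts `z`, while
`z²` is central: thus `z⁴ = 1`, `a` fixes `z`, and `a • g = g`.
-/

open Subgroup

section Group

variable {G : Type*} [Group G]

theorem IsPGroup.exists_index_eq_prime [Finite G] [Nontrivial G] {p : ℕ} [Fact p.Prime]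
    (hG : IsPGroup p G) : ∃ H : Subgroup G, H.index = p := by
  obtain ⟨m, hm⟩ := hG.exists_card_eq
  obtain ⟨k, rfl⟩ : ∃ k, m = k + 1 := Nat.exists_eq_succ_of_ne_zero <| by
    rintro rfl
    exact Finite.one_lt_card.ne' (by simpa using hm)
  obtain ⟨H, hH⟩ := Sylow.exists_subgroup_card_pow_prime p (hm ▸ pow_dvd_pow p k.le_succ)
  refine ⟨H, Nat.eq_of_mul_eq_mul_left (pow_pos (Fact.out : p.Prime).pos k) ?_⟩
  rw [← hH, card_mul_index, hm, pow_succ, hH]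

theorem closure_range_mul_self_characteristic :
    (closure (Set.range fun g : G => g * g)).Characteristic := by
  refine characteristic_iff_map_le.mpr fun ϕ => ?_
  rw [MonoidHom.map_closure, ← Set.range_comp]
  exact closure_mono <| Set.range_subset_iff.mpr fun g => ⟨ϕ g, by simp⟩

theorem IsPGroup.closure_range_mul_self_ne_top [Finite G] [Nontrivial G] (hG : IsPGroup 2 G) :
    closure (Set.range fun g : G => g * g) ≠ ⊤ := by
  have : Fact (Nat.Prime 2) := ⟨Nat.prime_two⟩
  obtain ⟨H, hH⟩ := hG.exists_index_eq_prime
  intro htop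
  have hle : closure (Set.range fun g : G => g * g) ≤ H :=
    (closure_le H).mpr <| Set.range_subset_iff.mpr (mul_self_mem_of_index_two hH)
  rw [htop, top_le_iff] at hle
  simp [hle] at hH

theorem orderOf_eq_two_or_four_of_pow_four_eq_one {x : G} (h4 : x ^ 4 = 1) (h1 : x ≠ 1) :
    orderOf x = 2 ∨ orderOf x = 4 := by
  obtain ⟨k, hk, hx⟩ :=
    (Nat.dvd_prime_pow Nat.prime_two).mp (orderOf_dvd_of_pow_eq_one (n := 2 ^ 2) h4)
  interval_cases k
  · exact absurd (orderOf_eq_one_iff.mp hx) h1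
  · exact .inl hx
  · exact .inr hx

theorem pow_four_eq_one_of_mul_mul_self_eq {a z : G} (h : a * z * (a * z) = a * a)
    (hc : Commute a (z * z)) : z ^ 4 = 1 := by
  have hza : z * a * z = a := mul_left_cancel (a := a) (by rw [← h]; group)
  have hza' : z * a = a * z⁻¹ := eq_mul_inv_of_mul_eq hza
  have hsq : z * z = z⁻¹ * z⁻¹ := mul_left_cancel <| hc.eq.trans <| by
    rw [mul_assoc, hza', ← mul_assoc, hza']; group
  calc z ^ 4 = z * z * (z * z) := by simp only [pow_succ, pow_zero, one_mul, mul_assoc]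
    _ = z⁻¹ * z⁻¹ * (z * z) := by rw [← hsq]
    _ = 1 := by group

theorem commute_inv_mul_apply_of_normal {N : Subgroup G} [N.Normal] {α : MulAut G}
    (hα : ∀ h ∈ N, α h = h) (g : G) {h : G} (hh : h ∈ N) : Commute (g⁻¹ * α g) h := by
  have hconj : α (g * h * g⁻¹) = g * h * g⁻¹ := hα _ (Normal.conj_mem ‹_› h hh g)
  rw [map_mul, map_mul, map_inv, hα h hh] at hconj
  calc g⁻¹ * α g * h = g⁻¹ * (α g * h * (α g)⁻¹) * α g := by group
    _ = h * (g⁻¹ * α g) := by rw [hconj]; group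

end Group

section Action

variable {A P : Type*} [Group A] [Group P] {φ : A →* MulAut P}

theorem MulAut.pow_apply_eq_mul_pow {α : MulAut P} {g z : P} (hg : α g = g * z) (hz : α z = z)
    (k : ℕ) : (α ^ k) g = g * z ^ k := by
  induction k with
  | zero => simp
  | succ k ih =>
    rw [pow_succ', MulAut.mul_apply, ih, map_mul, hg, map_pow, hz, pow_succ', mul_assoc]

theorem apply_eq_self_of_apply_eq_mul [Finite A] (hA : Odd (Nat.card A)) (hP : IsPGroup 2 P)
    {a : A} {g z : P} (hg : φ a g = g * z) (hz : φ a z = z) : φ a g = g := by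
  have hzpow : g * z ^ Nat.card A = g := by
    rw [← MulAut.pow_apply_eq_mul_pow hg hz, ← map_pow, pow_card_eq_one', map_one, MulAut.one_apply]
  have hz1 : z = 1 := (hP.powEquiv hA.coprime_two_left).injective <| by
    simpa [IsPGroup.powEquiv_apply] using hzpow
  rw [hg, hz1, mul_one]

variable (φ) in
def MonoidHom.restrictMulAut (H : Subgroup P) (hH : ∀ a, ∀ x ∈ H, φ a x ∈ H) : A →* MulAut H where
  toFun a :=
    { toFun := fun x => ⟨φ a x, hH a x x.2⟩
      invFun := fun x => ⟨φ a⁻¹ x, hH a⁻¹ x x.2⟩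
      left_inv := fun x => Subtype.ext <| by simp
      right_inv := fun x => Subtype.ext <| by simp
      map_mul' := fun x y => Subtype.ext <| map_mul (φ a) (x : P) (y : P) }
  map_one' := by ext; simp
  map_mul' a b := by ext; simp

variable (φ) in
/-- The subgroup `[P, A]`. -/
def actionCommutator : Subgroup P :=
  closure {x | ∃ (a : A) (g : P), g⁻¹ * φ a g = x}

theorem apply_mem_actionCommutator (b : A) {x : P} (hx : x ∈ actionCommutator φ) :
    φ b x ∈ actionCommutator φ := by
  have hmap : (actionCommutator φ).map (φ b).toMonoidHom ≤ actionCommutator φ := by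
    rw [actionCommutator, MonoidHom.map_closure]
    refine closure_mono ?_
    rintro _ ⟨_, ⟨a, g, rfl⟩, rfl⟩
    refine ⟨b * a * b⁻¹, φ b g, ?_⟩
    simp [MulAut.mul_apply]
  exact hmap (mem_map_of_mem _ hx)

theorem eq_one_of_forall_mem_actionCommutator [Finite A] (hA : Odd (Nat.card A))
    (hP : IsPGroup 2 P) (hK : ∀ a, ∀ x ∈ actionCommutator φ, φ a x = x) (a : A) : φ a = 1 := by
  ext g
  exact apply_eq_self_of_apply_eq_mul hA hP (mul_inv_cancel_left g _).symm
    (hK a _ (subset_closure ⟨a, g, rfl⟩))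

theorem actionCommutator_le_centralizer {N : Subgroup P} [N.Normal]
    (hN : ∀ a, ∀ h ∈ N, φ a h = h) : actionCommutator φ ≤ centralizer N := by
  refine (closure_le _).mpr ?_
  rintro _ ⟨a, g, rfl⟩
  exact mem_centralizer_iff.mpr fun h hh => (commute_inv_mul_apply_of_normal (hN a) g hh).eq.symm

theorem eq_one_of_forall_invariant_ne_top [Finite P] [Finite A] (hA : Odd (Nat.card A))
    (hP : IsPGroup 2 P) (hfix : ∀ x : P, orderOf x = 2 ∨ orderOf x = 4 → ∀ a : A, φ a x = x)
    (hproper : ∀ H : Subgroup P, H ≠ ⊤ → (∀ a, ∀ x ∈ H, φ a x ∈ H) → ∀ a, ∀ x ∈ H, φ a x = x)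
    (a : A) : φ a = 1 := by
  obtain hK | hK := ne_or_eq (actionCommutator φ) ⊤
  · exact eq_one_of_forall_mem_actionCommutator hA hP
      (hproper _ hK fun b _ => apply_mem_actionCommutator b) a
  cases subsingleton_or_nontrivial P
  · exact MulEquiv.ext fun _ => Subsingleton.elim _ _
  set N := closure (Set.range fun g : P => g * g)
  have hNchar : N.Characteristic := closure_range_mul_self_characteristic
  have hN : ∀ b, ∀ h ∈ N, φ b h = h := hproper N hP.closure_range_mul_self_ne_top fun b x hx =>
    (characteristic_iff_map_le.mp hNchar (φ b)) (mem_map_of_mem _ hx)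
  have hcentral : ∀ g : P, ∀ h ∈ N, Commute g h := fun g h hh =>
    (mem_centralizer_iff.mp (actionCommutator_le_centralizer hN (hK ▸ mem_top g)) h hh).symm
  ext g
  rw [MulAut.one_apply]
  set z := g⁻¹ * φ a g
  have hgz : φ a g = g * z := (mul_inv_cancel_left g _).symm
  by_cases hz1 : z = 1
  · rw [hgz, hz1, mul_one]
  have hz4 : z ^ 4 = 1 := by
    refine pow_four_eq_one_of_mul_mul_self_eq ?_ (hcentral g _ (subset_closure ⟨z, rfl⟩))
    rw [← hgz, ← map_mul, hN a _ (subset_closure ⟨g, rfl⟩)]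
  exact apply_eq_self_of_apply_eq_mul hA hP hgz
    (hfix z (orderOf_eq_two_or_four_of_pow_four_eq_one hz4 hz1) a)

end Action

theorem stmt7 {A P : Type*} [Group A] [Finite A] [Group P] [Finite P]
    (hA : Odd (Nat.card A)) (hP : IsPGroup 2 P) (φ : A →* MulAut P)
    (hfix : ∀ x : P, orderOf x = 2 ∨ orderOf x = 4 → ∀ a : A, φ a x = x) :
    ∀ a : A, φ a = 1 := by
  induction hn : Nat.card P using Nat.strong_induction_on generalizing P with
  | _ n ih =>
  refine eq_one_of_forall_invariant_ne_top hA hP hfix fun H hH hinv a x hx => ?_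
  have hcard : Nat.card H < n :=
    hn ▸ (card_le_card_group H).lt_of_ne fun h => hH (eq_top_of_card_eq H h)
  have hrestrict := ih _ hcard (hP.to_subgroup H) (φ.restrictMulAut H hinv)
    (fun y hy b => Subtype.ext (hfix y (by rwa [orderOf_coe]) b)) rfl a
  exact congrArg Subtype.val (DFunLike.congr_fun hrestrict ⟨x, hx⟩)
end

section
/- Let G be a finite group in which every element of order 2 and every element of order 4 lies in the center Z(G). Then G is 2-nilpotent. -/
universe u

/-- Hypothesis: every element has 2-power order. -/
def Hyp2 (Q : Type u) [Group Q] : Prop := ∀ x : Q, ∃ m : ℕ, orderOf x = 2 ^ m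

/-- Hypothesis: every element of order dividing 4 is central. -/
def Hyp4 (Q : Type u) [Group Q] : Prop := ∀ x : Q, orderOf x ∣ 4 → x ∈ Subgroup.center Q

section Abstract

variable {Q : Type u} [Group Q]

/-- If every element of order dividing 4 is central, then any element with 2-power order
conjugate to its inverse has order dividing 2. -/
theorem sq_eq_one_of_conj_inv (h2 : Hyp2 Q) (h4 : Hyp4 Q) {s u : Q}
    (h : u⁻¹ * s * u = s⁻¹) : s ^ 2 = 1 := by
  obtain ⟨m, hm⟩ := h2 s
  rcases Nat.lt_or_ge m 2 with hm2 | hm2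
  · have hdvd2 : orderOf s ∣ 2 ^ 1 := by
      rw [hm]
      exact pow_dvd_pow 2 (by omega)
    rw [pow_one] at hdvd2
    exact orderOf_dvd_iff_pow_eq_one.mp hdvd2
  · exfalso
    have hdvd : (2:ℕ) ^ (m - 2) ∣ 2 ^ m := pow_dvd_pow 2 (by omega)
    have hne : (2:ℕ) ^ (m - 2) ≠ 0 := by positivity
    have hord : orderOf (s ^ 2 ^ (m - 2)) = 4 := by
      rw [orderOf_pow' s hne, hm, Nat.gcd_eq_right hdvd, Nat.pow_div (by omega) (by norm_num),
        show m - (m - 2) = 2 by omega]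
    have hc : s ^ 2 ^ (m - 2) ∈ Subgroup.center Q := h4 _ (by rw [hord])
    have h1 : u⁻¹ * s ^ 2 ^ (m - 2) * u = (s ^ 2 ^ (m - 2))⁻¹ := by
      have := conj_pow (i := 2 ^ (m - 2)) (a := u⁻¹) (b := s)
      rw [inv_inv] at this
      rw [← this, h, inv_pow]
    have h2' : u⁻¹ * s ^ 2 ^ (m - 2) * u = s ^ 2 ^ (m - 2) := by
      rw [mul_assoc, ← Subgroup.mem_center_iff.mp hc u, ← mul_assoc, inv_mul_cancel, one_mul]
    have hsq : (s ^ 2 ^ (m - 2)) ^ 2 = 1 := by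
      rw [pow_two]
      nth_rewrite 1 [← h2']
      rw [h1, inv_mul_cancel]
    have := orderOf_dvd_iff_pow_eq_one.mpr hsq
    rw [hord] at this
    omega

/-- The subgroup of central elements of order dividing 2. -/
def Esub (Q : Type u) [Group Q] : Subgroup Q where
  carrier := {x | x ^ 2 = 1 ∧ ∀ g : Q, g * x = x * g}
  one_mem' := ⟨one_pow 2, fun g => by rw [mul_one, one_mul]⟩
  mul_mem' := by
    rintro a b ⟨ha2, hac⟩ ⟨hb2, hbc⟩
    constructor
    · rw [pow_two]
      calc a * b * (a * b) = a * (b * a) * b := by group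
      _ = a * (a * b) * b := by rw [hac b]
      _ = (a * a) * (b * b) := by group
      _ = a ^ 2 * b ^ 2 := by rw [pow_two, pow_two]
      _ = 1 := by rw [ha2, hb2, one_mul]
    · intro g
      calc g * (a * b) = (g * a) * b := by group
      _ = (a * g) * b := by rw [hac g]
      _ = a * (g * b) := by group
      _ = a * (b * g) := by rw [hbc g]
      _ = a * b * g := by group
  inv_mem' := by
    rintro a ⟨ha2, hac⟩
    refine ⟨by rw [inv_pow, ha2, inv_one], fun g => ?_⟩
    have := hac g⁻¹
    calc g * a⁻¹ = (a * g⁻¹)⁻¹ := by rw [mul_inv_rev, inv_inv]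
    _ = (g⁻¹ * a)⁻¹ := by rw [this]
    _ = a⁻¹ * g := by rw [mul_inv_rev, inv_inv]

instance (Q : Type u) [Group Q] : (Esub Q).Normal := by
  constructor
  intro n hn g
  have : g * n * g⁻¹ = n := by rw [hn.2 g, mul_assoc, mul_inv_cancel, mul_one]
  rw [this]; exact hn

theorem mem_Esub (h4 : Hyp4 Q) {x : Q} (hx : x ^ 2 = 1) : x ∈ Esub Q := by
  have hc : x ∈ Subgroup.center Q :=
    h4 x (dvd_trans (orderOf_dvd_iff_pow_eq_one.mpr hx) (by norm_num))
  exact ⟨hx, fun g => Subgroup.mem_center_iff.mp hc g⟩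

theorem hyp2_quot (h2 : Hyp2 Q) : Hyp2 (Q ⧸ Esub Q) := by
  intro x
  obtain ⟨y, rfl⟩ := QuotientGroup.mk_surjective x
  obtain ⟨m, hm⟩ := h2 y
  have : orderOf ((y : Q ⧸ Esub Q)) ∣ 2 ^ m := by
    rw [← hm]
    exact orderOf_map_dvd (QuotientGroup.mk' (Esub Q)) y
  obtain ⟨k, -, hk⟩ := (Nat.dvd_prime_pow Nat.prime_two).mp this
  exact ⟨k, hk⟩

theorem hyp4_quot (h2 : Hyp2 Q) (h4 : Hyp4 Q) : Hyp4 (Q ⧸ Esub Q) := by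
  intro x hx
  obtain ⟨y, rfl⟩ := QuotientGroup.mk_surjective x
  have hy4 : ((y : Q ⧸ Esub Q)) ^ 4 = 1 := orderOf_dvd_iff_pow_eq_one.mp hx
  have hy4' : y ^ 4 ∈ Esub Q := by
    rw [← QuotientGroup.eq_one_iff]
    simpa using hy4
  have hy8 : y ^ 8 = 1 := by
    have := hy4'.1
    rw [← pow_mul] at this
    norm_num at this
    exact this
  by_cases hc : orderOf y ∣ 4
  · have hcent := h4 y hc
    rw [Subgroup.mem_center_iff]
    intro g'
    obtain ⟨g, rfl⟩ := QuotientGroup.mk_surjective g'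
    rw [← QuotientGroup.mk_mul, ← QuotientGroup.mk_mul, Subgroup.mem_center_iff.mp hcent g]
  · -- orderOf y = 8
    have h8 : orderOf y = 8 := by
      obtain ⟨m, hm⟩ := h2 y
      have hdvd : (2:ℕ) ^ m ∣ 2 ^ 3 := by
        rw [← hm]
        exact orderOf_dvd_iff_pow_eq_one.mpr (by norm_num [hy8])
      have hm3 : m ≤ 3 := (Nat.pow_dvd_pow_iff_le_right (by norm_num)).mp hdvd
      have hm3' : m = 3 := by
        rcases Nat.lt_or_ge m 3 with hlt | hge
        · exfalso
          apply hc
          rw [hm, show (4:ℕ) = 2 ^ 2 by norm_num]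
          exact pow_dvd_pow 2 (by omega)
        · omega
      rw [hm, hm3']
      norm_num
    have hy2 : y ^ 2 ∈ Subgroup.center Q := by
      refine h4 _ ?_
      rw [orderOf_pow' y (by norm_num), h8]
      norm_num [Nat.gcd]
    rw [Subgroup.mem_center_iff]
    intro g'
    obtain ⟨g, rfl⟩ := QuotientGroup.mk_surjective g'
    set c : Q := y⁻¹ * g⁻¹ * y * g with hcdef
    have hkey : y⁻¹ * c * y = c⁻¹ := by
      have hid : y⁻¹ * c * y * c = y⁻¹ * y⁻¹ * (g⁻¹ * (y * y)) * g := by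
        rw [hcdef]; group
      have hy2c : g⁻¹ * (y * y) = y * y * g⁻¹ := by
        have := Subgroup.mem_center_iff.mp hy2 g⁻¹
        rwa [pow_two] at this
      have hone : y⁻¹ * c * y * c = 1 := by
        rw [hid, hy2c]
        group
      exact mul_eq_one_iff_eq_inv.mp hone
    have hc2 : c ^ 2 = 1 := sq_eq_one_of_conj_inv h2 h4 hkey
    have hcE : c ∈ Esub Q := mem_Esub h4 hc2
    rw [← QuotientGroup.mk_mul, ← QuotientGroup.mk_mul]
    rw [QuotientGroup.eq]
    have : (g * y)⁻¹ * (y * g) = c := by rw [hcdef]; group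
    rw [this]
    exact hcE

/-- The chain lemma: in a 2-group where elements of order dividing 4 are central,
if `w` and `s` have equal `2^L`-th powers then `s⁻¹ * w` has order dividing `2^L`. -/
theorem chain_lemma : ∀ (L : ℕ) (Q : Type u) [Group Q], Hyp2 Q → Hyp4 Q →
    ∀ s w : Q, w ^ 2 ^ L = s ^ 2 ^ L → (s⁻¹ * w) ^ 2 ^ L = 1 := by
  intro L
  induction L with
  | zero =>
    intro Q _ h2 h4 s w h
    simp only [pow_zero, pow_one] at h ⊢
    rw [h, inv_mul_cancel]
  | succ L ih =>
    intro Q _ h2 h4 s w h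
    set σ := s ^ 2 ^ L with hσ
    set ω := w ^ 2 ^ L with hω
    set d := σ⁻¹ * ω with hd
    have hσ2 : σ * σ = s ^ 2 ^ (L + 1) := by rw [hσ, ← pow_add]; ring_nf
    have hω2 : ω * ω = w ^ 2 ^ (L + 1) := by rw [hω, ← pow_add]; ring_nf
    have hrel : σ⁻¹ * d * σ * d = σ⁻¹ * σ⁻¹ * (ω * ω) := by rw [hd]; group
    have hrel1 : σ⁻¹ * d * σ * d = 1 := by
      rw [hrel, hω2, h, ← hσ2]
      group
    have hinv : σ⁻¹ * d * σ = d⁻¹ := mul_eq_one_iff_eq_inv.mp hrel1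
    have hd2 : d ^ 2 = 1 := sq_eq_one_of_conj_inv h2 h4 hinv
    have hdE : d ∈ Esub Q := mem_Esub h4 hd2
    have hq : ((w : Q ⧸ Esub Q)) ^ 2 ^ L = ((s : Q ⧸ Esub Q)) ^ 2 ^ L := by
      rw [← QuotientGroup.mk_pow, ← QuotientGroup.mk_pow, QuotientGroup.eq]
      have hinvd : (w ^ 2 ^ L)⁻¹ * s ^ 2 ^ L = d⁻¹ := by
        rw [hd, hσ, hω]; group
      rw [hinvd]
      exact inv_mem hdE
    have hih := ih (Q ⧸ Esub Q) (hyp2_quot h2) (hyp4_quot h2 h4)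
      ((s : Q ⧸ Esub Q)) ((w : Q ⧸ Esub Q)) hq
    have hmem : (s⁻¹ * w) ^ 2 ^ L ∈ Esub Q := by
      rw [← QuotientGroup.eq_one_iff, QuotientGroup.mk_pow, QuotientGroup.mk_mul,
        QuotientGroup.mk_inv]
      exact hih
    have h1 := hmem.1
    rw [show (2:ℕ) ^ (L + 1) = 2 ^ L * 2 by ring, pow_mul]
    exact h1

end Abstract
section EV

open Subgroup MonoidHom MulAction Function

variable {G : Type*} [Group G] {H : Subgroup G} {A : Type*} [CommGroup A]

/-- Variant of `MonoidHom.transfer_eq_pow`: if all conjugates of powers of `g` landing in `H`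
have the same image under `ϕ` as the corresponding power of `g`, then the transfer of `g`
is `ϕ g ^ H.index`. -/
theorem transfer_eq_pow_phi (ϕ : H →* A) [H.FiniteIndex] (g : G) (hg : g ∈ H)
    (key : ∀ (k : ℕ) (g₀ : G) (hk : g₀⁻¹ * g ^ k * g₀ ∈ H),
      ϕ ⟨g₀⁻¹ * g ^ k * g₀, hk⟩ = ϕ ⟨g, hg⟩ ^ k) :
    MonoidHom.transfer ϕ g = ϕ ⟨g, hg⟩ ^ H.index := by
  classical
  letI := H.fintypeQuotientOfFiniteIndex
  rw [MonoidHom.transfer_eq_prod_quotient_orbitRel_zpowers_quot]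
  have hsum : ∑ q : Quotient (orbitRel (zpowers g) (G ⧸ H)),
      Function.minimalPeriod (g • ·) q.out = H.index := by
    rw [index_eq_card, Nat.card_eq_fintype_card,
      Fintype.card_congr (selfEquivSigmaOrbits (zpowers g) (G ⧸ H)), Fintype.card_sigma]
    exact Finset.sum_congr rfl fun q _ => minimalPeriod_eq_card g q.out
  calc (∏ q : Quotient (orbitRel (zpowers g) (G ⧸ H)), ϕ
        ⟨q.out.out⁻¹ * g ^ Function.minimalPeriod (g • ·) q.out * q.out.out,
          QuotientGroup.out_conj_pow_minimalPeriod_mem H g q.out⟩)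
      = ∏ q : Quotient (orbitRel (zpowers g) (G ⧸ H)),
          ϕ ⟨g, hg⟩ ^ Function.minimalPeriod (g • ·) q.out :=
        Finset.prod_congr rfl fun q _ => key _ _ _
    _ = ϕ ⟨g, hg⟩ ^ H.index := by rw [Finset.prod_pow_eq_pow_sum, hsum]

end EV
section Main

open Subgroup MonoidHom

theorem normal_of_index_two {G : Type u} [Group G] (K : Subgroup G) (h : K.index = 2) :
    K.Normal := by
  constructor
  intro n hn g
  have h2 := Subgroup.mul_mem_iff_of_index_two h (a := g * n) (b := g⁻¹)
  rw [h2]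
  have h3 := Subgroup.mul_mem_iff_of_index_two h (a := g) (b := n)
  rw [h3]
  simp [hn, Subgroup.inv_mem_iff]

def TwoNilpotentAux (G : Type u) [Group G] : Prop :=
  ∃ N : Subgroup G, N.Normal ∧ Odd (Nat.card N) ∧ ∃ k : ℕ, N.index = 2 ^ k

theorem main_induction : ∀ (n : ℕ) (G : Type u) [Group G] [Finite G], Nat.card G = n →
    (∀ x : G, orderOf x = 2 ∨ orderOf x = 4 → x ∈ Subgroup.center G) → TwoNilpotentAux G := by
  intro n
  induction n using Nat.strong_induction_on with
  | _ n IH =>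
  intro G _ _ hn h
  rcases Nat.even_or_odd (Nat.card G) with heven | hodd
  case inr =>
    refine ⟨⊤, inferInstance, ?_, 0, by simp [Subgroup.index_top]⟩
    rwa [Subgroup.card_top]
  case inl =>
  haveI : Fact (Nat.Prime 2) := ⟨Nat.prime_two⟩
  have h4G : ∀ x : G, orderOf x ∣ 4 → x ∈ Subgroup.center G := by
    intro x hx
    have hx' : orderOf x ∣ 2 ^ 2 := by rw [show (2:ℕ)^2 = 4 by norm_num]; exact hx
    obtain ⟨m, hmle, hm⟩ := (Nat.dvd_prime_pow Nat.prime_two).mp hx'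
    interval_cases m
    · have : x = 1 := orderOf_eq_one_iff.mp (by simpa using hm)
      rw [this]; exact Subgroup.one_mem _
    · exact h x (Or.inl (by simpa using hm))
    · exact h x (Or.inr (by simpa using hm))
  obtain ⟨P⟩ := (inferInstance : Nonempty (Sylow 2 G))
  set Ps : Subgroup G := ↑P with hPs
  haveI : Ps.FiniteIndex := inferInstance
  have hPodd : ¬ (2 ∣ Ps.index) := P.not_dvd_index
  have hcards : Nat.card ↥Ps * Ps.index = Nat.card G := Subgroup.card_mul_index Ps
  have h2P : 2 ∣ Nat.card ↥Ps := by
    rcases (Nat.Prime.dvd_mul Nat.prime_two).mp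
        (show 2 ∣ Nat.card ↥Ps * Ps.index by rw [hcards]; exact heven.two_dvd) with h1 | h1
    · exact h1
    · exact absurd h1 hPodd
  obtain ⟨a, hcardP⟩ := IsPGroup.iff_card.mp P.isPGroup'
  have ha1 : 1 ≤ a := by
    by_contra hlt
    push_neg at hlt
    have ha0 : a = 0 := by omega
    rw [ha0, pow_zero] at hcardP
    rw [hcardP] at h2P
    norm_num at h2P
  obtain ⟨K, hK⟩ := Sylow.exists_subgroup_card_pow_prime (G := ↥Ps) 2 (n := a - 1)
      (by rw [hcardP]; exact pow_dvd_pow 2 (by omega))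
  have hKi : K.index = 2 := by
    have hmul := Subgroup.card_mul_index K
    rw [hK, hcardP] at hmul
    have hstep : (2:ℕ) ^ (a - 1) * K.index = 2 ^ (a - 1) * 2 := by
      rw [hmul, ← pow_succ]
      congr 1
      omega
    exact Nat.eq_of_mul_eq_mul_left (by positivity) hstep
  haveI hKn : K.Normal := normal_of_index_two K hKi
  haveI : Finite (↥Ps ⧸ K) := Quotient.finite _
  letI : Fintype (↥Ps ⧸ K) := Fintype.ofFinite _
  have hcardQt : Nat.card (↥Ps ⧸ K) = 2 := by rw [← hKi]; rfl
  haveI : IsCyclic (↥Ps ⧸ K) := isCyclic_of_prime_card (p := 2) hcardQt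
  letI : CommGroup (↥Ps ⧸ K) := IsCyclic.commGroup
  set φ : ↥Ps →* (↥Ps ⧸ K) := QuotientGroup.mk' K with hφ
  have h2Ps : Hyp2 ↥Ps := IsPGroup.iff_orderOf.mp P.isPGroup'
  have h4Ps : Hyp4 ↥Ps := by
    intro x hx
    have hxG : (x:G) ∈ Subgroup.center G := h4G x (by rwa [Subgroup.orderOf_coe])
    rw [Subgroup.mem_center_iff]
    intro g'
    exact Subtype.ext (Subgroup.mem_center_iff.mp hxG g')
  by_cases htriv : ∀ x : G, MonoidHom.transfer φ x = 1
  · -- bootstrap: every element of Ps lies in K, contradiction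
    exfalso
    have hallK : ∀ (N : ℕ) (y : G) (hy : y ∈ Ps), orderOf y = N → (⟨y, hy⟩ : ↥Ps) ∈ K := by
      intro N
      induction N using Nat.strong_induction_on with
      | _ N IHN =>
      intro y hy hordy
      have key : ∀ (k : ℕ) (g₀ : G) (hk : g₀⁻¹ * y ^ k * g₀ ∈ Ps),
          φ ⟨g₀⁻¹ * y ^ k * g₀, hk⟩ = φ ⟨y, hy⟩ ^ k := by
        intro k g₀ hk
        have hyk : y ^ k ∈ Ps := pow_mem hy k
        have hsubpow : (⟨y, hy⟩ : ↥Ps) ^ k = ⟨y ^ k, hyk⟩ := by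
          apply Subtype.ext
          rw [SubmonoidClass.coe_pow]
        by_cases hj4 : orderOf (y ^ k) ∣ 4
        · have hcen : y ^ k ∈ Subgroup.center G := h4G _ hj4
          have hfix : g₀⁻¹ * y ^ k * g₀ = y ^ k := by
            rw [mul_assoc, ← Subgroup.mem_center_iff.mp hcen g₀, ← mul_assoc,
              inv_mul_cancel, one_mul]
          have heq : (⟨g₀⁻¹ * y ^ k * g₀, hk⟩ : ↥Ps) = ⟨y ^ k, hyk⟩ := Subtype.ext hfix
          rw [heq, ← hsubpow, map_pow]
        · obtain ⟨j, hj⟩ := h2Ps ⟨y ^ k, hyk⟩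
          rw [Subgroup.orderOf_mk] at hj
          have hj3 : 3 ≤ j := by
            by_contra hlt
            push_neg at hlt
            apply hj4
            rw [hj, show (4:ℕ) = 2 ^ 2 by norm_num]
            exact pow_dvd_pow 2 (by omega)
          have hordc : orderOf ((y ^ k) ^ 2 ^ (j - 2)) = 4 := by
            rw [orderOf_pow' _ (show (2:ℕ) ^ (j-2) ≠ 0 by positivity), hj,
              Nat.gcd_eq_right (pow_dvd_pow 2 (by omega)),
              Nat.pow_div (by omega) (by norm_num), show j - (j - 2) = 2 by omega]
          have hcen : (y ^ k) ^ 2 ^ (j - 2) ∈ Subgroup.center G := h4G _ (by rw [hordc])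
          have hterm : (g₀⁻¹ * y ^ k * g₀) ^ 2 ^ (j - 2) = (y ^ k) ^ 2 ^ (j - 2) := by
            have hconj := conj_pow (i := 2 ^ (j - 2)) (a := g₀⁻¹) (b := y ^ k)
            rw [inv_inv] at hconj
            rw [hconj, mul_assoc, ← Subgroup.mem_center_iff.mp hcen g₀, ← mul_assoc,
              inv_mul_cancel, one_mul]
          have hterm' : (⟨g₀⁻¹ * y ^ k * g₀, hk⟩ : ↥Ps) ^ 2 ^ (j - 2)
              = (⟨y ^ k, hyk⟩ : ↥Ps) ^ 2 ^ (j - 2) := by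
            apply Subtype.ext
            rw [SubmonoidClass.coe_pow, SubmonoidClass.coe_pow]
            exact hterm
          have hch := chain_lemma (j - 2) ↥Ps h2Ps h4Ps ⟨y ^ k, hyk⟩
            ⟨g₀⁻¹ * y ^ k * g₀, hk⟩ hterm'
          set dd : ↥Ps := (⟨y ^ k, hyk⟩ : ↥Ps)⁻¹ * ⟨g₀⁻¹ * y ^ k * g₀, hk⟩ with hdd
          have hddK : dd ∈ K := by
            obtain ⟨m, hm⟩ := h2Ps dd
            have hmj : m ≤ j - 2 := by
              have hdv : (2:ℕ) ^ m ∣ 2 ^ (j - 2) := by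
                rw [← hm]
                exact orderOf_dvd_iff_pow_eq_one.mpr hch
              exact (Nat.pow_dvd_pow_iff_le_right (by norm_num)).mp hdv
            have hlt : orderOf ((dd : G)) < N := by
              rw [Subgroup.orderOf_coe, hm]
              have hdvdN : (2:ℕ) ^ j ∣ N := by
                rw [← hj, ← hordy]
                exact orderOf_pow_dvd k
              have hNpos : 0 < N := by
                rw [← hordy]; exact orderOf_pos y
              have h2jN : 2 ^ j ≤ N := Nat.le_of_dvd hNpos hdvdN
              calc (2:ℕ) ^ m < 2 ^ j := Nat.pow_lt_pow_right (by norm_num) (by omega)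
              _ ≤ N := h2jN
            have := IHN (orderOf ((dd : G))) hlt (dd : G) dd.2 rfl
            simpa using this
          have hwdecomp : (⟨g₀⁻¹ * y ^ k * g₀, hk⟩ : ↥Ps) = ⟨y ^ k, hyk⟩ * dd := by
            rw [hdd, mul_inv_cancel_left]
          rw [hwdecomp, map_mul]
          have hφdd : φ dd = 1 := by
            have : dd ∈ (QuotientGroup.mk' K).ker := by
              rwa [QuotientGroup.ker_mk']
            exact this
          rw [hφdd, mul_one, ← hsubpow, map_pow]
      have hEV := transfer_eq_pow_phi φ y hy key
      rw [htriv y] at hEV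
      have ha2 : orderOf (φ ⟨y, hy⟩) ∣ 2 := by
        rw [← hcardQt]
        exact orderOf_dvd_natCard _
      have haI : orderOf (φ ⟨y, hy⟩) ∣ Ps.index := orderOf_dvd_of_pow_eq_one hEV.symm
      have hone : orderOf (φ ⟨y, hy⟩) = 1 := by
        rcases (Nat.dvd_prime Nat.prime_two).mp ha2 with h1 | h1
        · exact h1
        · exact absurd (h1 ▸ haI) hPodd
      have hker : φ ⟨y, hy⟩ = 1 := orderOf_eq_one_iff.mp hone
      have : (⟨y, hy⟩ : ↥Ps) ∈ (QuotientGroup.mk' K).ker := hker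
      rwa [QuotientGroup.ker_mk'] at this
    have hKtop : K = ⊤ := by
      rw [Subgroup.eq_top_iff']
      rintro ⟨y, hy⟩
      exact hallK (orderOf y) y hy rfl
    rw [hKtop, Subgroup.index_top] at hKi
    norm_num at hKi
  · push_neg at htriv
    obtain ⟨x₀, hx₀⟩ := htriv
    set V := MonoidHom.transfer φ with hV
    have hrange2 : Nat.card ↥V.range = 2 := by
      have hdvd : Nat.card ↥V.range ∣ 2 := by
        rw [← hcardQt]
        exact Subgroup.card_subgroup_dvd_card V.range
      rcases (Nat.dvd_prime Nat.prime_two).mp hdvd with h1 | h1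
      · exfalso
        haveI : Subsingleton ↥V.range := (Nat.card_eq_one_iff_unique.mp h1).1
        apply hx₀
        have hmem : V x₀ ∈ V.range := ⟨x₀, rfl⟩
        have hmem1 : (1 : ↥Ps ⧸ K) ∈ V.range := Subgroup.one_mem _
        have := Subsingleton.elim (⟨V x₀, hmem⟩ : ↥V.range) ⟨1, hmem1⟩
        exact congrArg Subtype.val this
      · exact h1
    have hNi : V.ker.index = 2 := by rw [Subgroup.index_ker, hrange2]
    have hkermul : Nat.card ↥V.ker * 2 = Nat.card G := by
      rw [← hNi]; exact Subgroup.card_mul_index V.ker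
    have hkerpos : 0 < Nat.card ↥V.ker := Nat.card_pos
    have hlt : Nat.card ↥V.ker < Nat.card G := by omega
    obtain ⟨M', hM'norm, hM'odd, k, hM'ind⟩ := IH (Nat.card ↥V.ker) (by rw [← hn]; exact hlt)
      ↥V.ker rfl (fun x hx => by
        have hxG : (x:G) ∈ Subgroup.center G := h x (by rwa [Subgroup.orderOf_coe])
        rw [Subgroup.mem_center_iff]
        intro g'
        exact Subtype.ext (Subgroup.mem_center_iff.mp hxG g'))
    haveI := hM'norm
    set N := Subgroup.map V.ker.subtype M' with hNdef
    have hcardN : Nat.card ↥N = Nat.card ↥M' :=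
      (Nat.card_congr (Subgroup.equivMapOfInjective M' V.ker.subtype
        V.ker.subtype_injective).toEquiv).symm
    have hchar : ∀ g : G, g ∈ N ↔ ∃ hg : g ∈ V.ker, (⟨g, hg⟩ : ↥V.ker) ∈ M' := by
      intro g
      constructor
      · rintro ⟨x, hxM, rfl⟩
        exact ⟨x.2, by simpa using hxM⟩
      · rintro ⟨hg, hM⟩
        exact ⟨⟨g, hg⟩, hM, rfl⟩
    have hodd' : ∀ g : G, g ∈ N → Odd (orderOf g) := by
      intro g hg
      rw [hchar] at hg
      obtain ⟨hg1, hg2⟩ := hg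
      have hdvd : orderOf (⟨g, hg1⟩ : ↥V.ker) ∣ Nat.card ↥M' :=
        Subgroup.orderOf_dvd_natCard M' hg2
      rw [Subgroup.orderOf_mk] at hdvd
      exact Odd.of_dvd_nat hM'odd hdvd
    have hmem_of : ∀ g : G, g ∈ V.ker → Odd (orderOf g) → g ∈ N := by
      intro g hg hoddg
      rw [hchar]
      refine ⟨hg, ?_⟩
      have hq1 : orderOf (((⟨g, hg⟩ : ↥V.ker) : ↥V.ker ⧸ M')) ∣ 2 ^ k := by
        rw [← hM'ind]
        exact orderOf_dvd_natCard _
      have hq2 : orderOf (((⟨g, hg⟩ : ↥V.ker) : ↥V.ker ⧸ M')) ∣ orderOf g := by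
        rw [← Subgroup.orderOf_mk g hg]
        exact orderOf_map_dvd (QuotientGroup.mk' M') _
      have hcop : Nat.Coprime (2 ^ k) (orderOf g) := Nat.Coprime.pow_left k (by
        rw [Nat.Prime.coprime_iff_not_dvd Nat.prime_two]
        intro hdvd2
        rw [Nat.odd_iff] at hoddg
        omega)
      have hone : orderOf (((⟨g, hg⟩ : ↥V.ker) : ↥V.ker ⧸ M')) = 1 :=
        Nat.dvd_one.mp (hcop ▸ Nat.dvd_gcd hq1 hq2)
      have heq1 : (((⟨g, hg⟩ : ↥V.ker) : ↥V.ker ⧸ M')) = 1 := orderOf_eq_one_iff.mp hone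
      rwa [QuotientGroup.eq_one_iff] at heq1
    refine ⟨N, ?_, ?_, k + 1, ?_⟩
    · constructor
      intro x hx g
      obtain ⟨hx1, -⟩ := (hchar x).mp hx
      apply hmem_of
      · exact (MonoidHom.normal_ker V).conj_mem x hx1 g
      · have hconjord : orderOf (g * x * g⁻¹) = orderOf x := by
          have := orderOf_injective (MulAut.conj g).toMonoidHom (MulEquiv.injective _) x
          simpa using this
        rw [hconjord]
        exact hodd' x hx
    · rw [hcardN]; exact hM'odd
    · have h1 : Nat.card ↥V.ker = Nat.card ↥M' * 2 ^ k := by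
        rw [← hM'ind]; exact (Subgroup.card_mul_index M').symm
      have h2 : Nat.card ↥N * N.index = Nat.card G := Subgroup.card_mul_index N
      have hM'pos : 0 < Nat.card ↥M' := Nat.card_pos
      have hmain : Nat.card ↥M' * N.index = Nat.card ↥M' * 2 ^ (k + 1) := by
        calc Nat.card ↥M' * N.index = Nat.card ↥N * N.index := by rw [hcardN]
        _ = Nat.card G := h2
        _ = Nat.card ↥V.ker * 2 := hkermul.symm
        _ = Nat.card ↥M' * 2 ^ k * 2 := by rw [h1]
        _ = Nat.card ↥M' * 2 ^ (k + 1) := by ring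
      exact Nat.eq_of_mul_eq_mul_left hM'pos hmain

end Main

def TwoNilpotent (G : Type*) [Group G] : Prop :=
  ∃ N : Subgroup G, N.Normal ∧ Odd (Nat.card N) ∧ ∃ k : ℕ, N.index = 2 ^ k

theorem stmt8 {G : Type*} [Group G] [Finite G]
    (h : ∀ x : G, orderOf x = 2 ∨ orderOf x = 4 → x ∈ Subgroup.center G) :
    TwoNilpotent G := by
  obtain ⟨N, hN, hO, k, hk⟩ := main_induction (Nat.card G) G rfl h
  exact ⟨N, hN, hO, k, hk⟩
end

section
/- Let G be a finite group, N a normal subgroup of G, and H a strongly closed p-subgroup of G. Then the image HN/N of H in G/N is strongly closed in G/N, and N_{G/N}(HN/N) = N_G(H)N/N. -/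
/-!
A strongly closed p-subgroup `H` is normalized by every p-subgroup `P ≥ H`: by the normalizer
condition in the nilpotent group `P` it suffices that `N_P(N_P(H)) ≤ N(H)`, and an element of
`N_P(N_P(H))` conjugates `H` into `N(H)`, hence into `H`. With Sylow's theorem inside a subgroup
`L ≥ H` this gives a Frattini argument: a p-subgroup of `L` lying in a conjugate of `H` lies in an
`L`-conjugate of `H`. Taking `L = HN`, the preimage of `HN/N`, conjugates of `H` inside `HN` are
`HN`-conjugates, which gives the normalizer formula, and an element of a conjugate of `H`
normalizing `HN` lies in `HN`, which gives strong closure of `HN/N`.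
-/

def StronglyClosed {G : Type*} [Group G] (H : Subgroup G) : Prop :=
  ∀ g : G, H.map (MulAut.conj g).toMonoidHom ⊓ Subgroup.normalizer (H : Set G) ≤ H

-- `MulAut.conj g • H` unfolds to `H.map (MulAut.conj g).toMonoidHom`, as in `StronglyClosed`.
open Subgroup Pointwise

section

variable {G : Type*} [Group G]

namespace Subgroup

theorem conj_smul_eq_self_iff {H : Subgroup G} {g : G} :
    MulAut.conj g • H = H ↔ g ∈ normalizer (H : Set G) :=
  conjAct_pointwise_smul_iff

theorem mem_normalizer_of_conj_smul_le [Finite G] {H : Subgroup G} {g : G}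
    (h : MulAut.conj g • H ≤ H) : g ∈ normalizer (H : Set G) :=
  conj_smul_eq_self_iff.mp <| eq_of_le_of_card_ge h
    (Nat.card_congr (equivSMul (MulAut.conj g) H).toEquiv).le

theorem map_conj_smul {K : Type*} [Group K] (f : G →* K) (g : G) (H : Subgroup G) :
    (MulAut.conj g • H).map f = MulAut.conj (f g) • H.map f := by
  ext x
  simp [pointwise_smul_def]

theorem normalizer_conj_smul (c : G) (H : Subgroup G) :
    normalizer ((MulAut.conj c • H : Subgroup G) : Set G) =
      MulAut.conj c • normalizer (H : Set G) :=
  (map_equiv_normalizer_eq H (MulAut.conj c)).symm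

theorem exists_isPGroup_le_and_conj_smul_le [Finite G] {p : ℕ} [Fact p.Prime]
    {A B L : Subgroup G} (hA : IsPGroup p A) (hB : IsPGroup p B) (hAL : A ≤ L) (hBL : B ≤ L) :
    ∃ x ∈ L, ∃ P : Subgroup G, IsPGroup p P ∧ A ≤ P ∧ MulAut.conj x • B ≤ P := by
  obtain ⟨S, hAS⟩ := (hA.comap_of_injective _ L.subtype_injective).exists_le_sylow
  obtain ⟨T, hBT⟩ := (hB.comap_of_injective _ L.subtype_injective).exists_le_sylow
  obtain ⟨x, rfl⟩ := MulAction.exists_smul_eq L T S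
  refine ⟨x, x.2, ((x • T : Sylow p L) : Subgroup L).map L.subtype, (x • T).2.map _, ?_, ?_⟩
  · intro a ha
    exact ⟨⟨a, hAL ha⟩, hAS ha, rfl⟩
  · rintro _ ⟨b, hb, rfl⟩
    exact ⟨x * ⟨b, hBL hb⟩ * x⁻¹, ⟨_, hBT hb, rfl⟩, rfl⟩

end Subgroup

namespace StronglyClosed

variable {H : Subgroup G}

theorem conj_smul (hH : StronglyClosed H) (c : G) : StronglyClosed (MulAut.conj c • H) := by
  intro g
  have hg : MulAut.conj g • MulAut.conj c • H =
      MulAut.conj c • MulAut.conj (c⁻¹ * g * c) • H := by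
    simp only [smul_smul, ← map_mul]
    group
  show MulAut.conj g • MulAut.conj c • H ⊓ _ ≤ _
  rw [normalizer_conj_smul, hg, ← smul_inf, pointwise_smul_le_pointwise_smul_iff]
  exact hH _

variable [Finite G] {p : ℕ} [Fact p.Prime]

theorem le_normalizer_of_isPGroup (hH : StronglyClosed H) {P : Subgroup G} (hP : IsPGroup p P)
    (hHP : H ≤ P) : P ≤ normalizer (H : Set G) := by
  have := hP.isNilpotent
  set K : Subgroup P := (normalizer (H : Set G)).subgroupOf P
  have hK : normalizer (K : Set P) = K := by
    refine le_antisymm (fun x hx => ?_) le_normalizer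
    have hconj : MulAut.conj (x : G) • H ≤ normalizer (H : Set G) := by
      rintro _ ⟨h, hh, rfl⟩
      exact (mem_normalizer_iff.mp hx ⟨h, hHP hh⟩).mp (le_normalizer hh)
    exact mem_normalizer_of_conj_smul_le fun y hy => hH x ⟨hy, hconj hy⟩
  have hKtop := normalizerCondition_iff_only_full_group_self_normalizing.mp
    Group.normalizerCondition_of_isNilpotent K hK
  intro y hy
  have hyK : (⟨y, hy⟩ : P) ∈ K := hKtop ▸ mem_top _
  exact mem_subgroupOf.mp hyK

theorem exists_le_conj_smul (hH : StronglyClosed H) (hp : IsPGroup p H) {A L : Subgroup G}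
    (hHL : H ≤ L) (hAL : A ≤ L) {g : G} (hA : A ≤ MulAut.conj g • H) :
    ∃ x ∈ L, A ≤ MulAut.conj x • H := by
  obtain ⟨x, hxL, P, hP, hAP, hxP⟩ :=
    exists_isPGroup_le_and_conj_smul_le ((hp.map (MulAut.conj g).toMonoidHom).to_le hA) hp hAL hHL
  refine ⟨x, hxL, fun a ha => hH.conj_smul x (g * x⁻¹) ⟨?_, ?_⟩⟩
  · show a ∈ MulAut.conj (g * x⁻¹) • MulAut.conj x • H
    rw [smul_smul, ← map_mul, inv_mul_cancel_right]
    exact hA ha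
  · exact (hH.conj_smul x).le_normalizer_of_isPGroup hP hxP (hAP ha)

theorem mem_sup_normalizer_of_conj_smul_le (hH : StronglyClosed H) (hp : IsPGroup p H)
    {L : Subgroup G} (hHL : H ≤ L) {g : G} (hg : MulAut.conj g • H ≤ L) :
    g ∈ L ⊔ normalizer (H : Set G) := by
  obtain ⟨x, hxL, hx⟩ := hH.exists_le_conj_smul hp hHL hg le_rfl
  have hxg : x⁻¹ * g ∈ normalizer (H : Set G) := by
    refine mem_normalizer_of_conj_smul_le ?_
    rw [map_mul, ← smul_smul, map_inv, ← subset_pointwise_smul_iff]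
    exact hx
  simpa using mul_mem (mem_sup_left hxL) (mem_sup_right hxg)

theorem mem_of_mem_conj_smul_of_mem_normalizer (hH : StronglyClosed H) (hp : IsPGroup p H)
    {J : Subgroup G} (hHJ : H ≤ J) {g a : G} (ha : a ∈ MulAut.conj g • H)
    (haJ : a ∈ normalizer (J : Set G)) : a ∈ J := by
  obtain ⟨x, hxL, hx⟩ := hH.exists_le_conj_smul hp (hHJ.trans le_sup_left) le_sup_right
    (zpowers_le.mpr ha : zpowers a ≤ _)
  have hxJ : MulAut.conj x • J = J :=
    conj_smul_eq_self_iff.mpr (sup_le le_normalizer (zpowers_le.mpr haJ) hxL)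
  exact hxJ ▸ pointwise_smul_le_pointwise_smul_iff.mpr hHJ (hx (mem_zpowers a))

end StronglyClosed

end

theorem stmt10 {G : Type*} [Group G] [Finite G] (p : ℕ) [Fact p.Prime]
    (N H : Subgroup G) [N.Normal] (hp : IsPGroup p H) (hSC : StronglyClosed H) :
    StronglyClosed (H.map (QuotientGroup.mk' N)) ∧
      Subgroup.normalizer ((H.map (QuotientGroup.mk' N) : Subgroup (G ⧸ N)) : Set (G ⧸ N)) =
        (Subgroup.normalizer (H : Set G)).map (QuotientGroup.mk' N) := by
  set π := QuotientGroup.mk' N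
  set J := (H.map π).comap π
  have hHJ : H ≤ J := le_comap_map π H
  have hnormJ : ∀ {g : G},
      π g ∈ normalizer (H.map π : Set (G ⧸ N)) ↔ g ∈ normalizer (J : Set G) := by
    rw [← comap_normalizer_eq_of_surjective _ (QuotientGroup.mk'_surjective N)]
    exact Iff.rfl
  constructor
  · intro q
    obtain ⟨g, rfl⟩ := QuotientGroup.mk'_surjective N q
    show MulAut.conj (π g) • H.map π ⊓ _ ≤ _
    rw [← map_conj_smul]
    rintro _ ⟨⟨a, ha, rfl⟩, haN⟩
    exact hSC.mem_of_mem_conj_smul_of_mem_normalizer hp hHJ ha (hnormJ.mp haN)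
  · refine le_antisymm (fun q hq => ?_) (le_normalizer_map π)
    obtain ⟨g, rfl⟩ := QuotientGroup.mk'_surjective N q
    have hg : MulAut.conj g • H ≤ J :=
      (pointwise_smul_le_pointwise_smul_iff.mpr hHJ).trans
        (conj_smul_eq_self_iff.mpr (hnormJ.mp hq)).le
    have hπg := mem_map_of_mem π (hSC.mem_sup_normalizer_of_conj_smul_le hp hHJ hg)
    rwa [Subgroup.map_sup, map_comap_eq_self_of_surjective (QuotientGroup.mk'_surjective N),
      sup_eq_right.mpr (map_mono le_normalizer)] at hπg
end

section
/- Let G be a finite group and H a strongly closed subgroup of G. If H is subnormal in G, then H is normal in G. -/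
/-- `H` is subnormal in `G`: there is a chain `H = H₀ ⊴ H₁ ⊴ ⋯ ⊴ Hₙ = G`. -/
def Subnormal {G : Type*} [Group G] (H : Subgroup G) : Prop :=
  ∃ (n : ℕ) (c : Fin (n + 1) → Subgroup G),
    c 0 = H ∧ c (Fin.last n) = ⊤ ∧
    ∀ i : Fin n, ∃ _ : c i.castSucc ≤ c i.succ,
      ((c i.castSucc).subgroupOf (c i.succ)).Normal

open Subgroup

section

variable {G : Type*} [Group G]

theorem Subgroup.le_normalizer_of_map_conj_le {H L : Subgroup G}
    (hconj : ∀ g ∈ L, H.map (MulAut.conj g).toMonoidHom ≤ H) : L ≤ normalizer (H : Set G) := by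
  intro g hg
  rw [mem_normalizer_iff]
  intro h
  refine ⟨fun hh => hconj g hg ⟨h, hh, rfl⟩, fun hh => ?_⟩
  have := hconj g⁻¹ (L.inv_mem hg) ⟨_, hh, rfl⟩
  simpa [mul_assoc] using this

theorem StronglyClosed.le_normalizer_of_normal_subgroupOf {H K L : Subgroup G}
    (hSC : StronglyClosed H) (hHK : H ≤ K) (hKN : K ≤ normalizer (H : Set G)) (hKL : K ≤ L)
    [(K.subgroupOf L).Normal] : L ≤ normalizer (H : Set G) := by
  refine le_normalizer_of_map_conj_le fun g hg => ?_
  have hgK : K.map (MulAut.conj g).toMonoidHom = K :=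
    mem_normalizer_iff_map_conj_eq.mp (Subgroup.le_normalizer_of_normal_subgroupOf hKL hg)
  have hconjK : H.map (MulAut.conj g).toMonoidHom ≤ K := hgK ▸ map_mono hHK
  exact (le_inf le_rfl (hconjK.trans hKN)).trans (hSC g)

theorem Subnormal.induction_top {H : Subgroup G} (hsub : Subnormal H) {P : Subgroup G → Prop}
    (hH : P H) (hstep : ∀ K L : Subgroup G, K ≤ L → (K.subgroupOf L).Normal → P K → P L) :
    P ⊤ := by
  obtain ⟨n, c, hc0, hctop, hnormal⟩ := hsub
  have hchain : ∀ j, P (c j) := by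
    intro j
    induction j using Fin.induction with
    | zero => rwa [hc0]
    | succ i ih =>
      obtain ⟨hle, hN⟩ := hnormal i
      exact hstep _ _ hle hN ih
  simpa [hctop] using hchain (Fin.last n)

end

theorem stmt11_general {G : Type*} [Group G] (H : Subgroup G)
    (hSC : StronglyClosed H) (hsub : Subnormal H) : H.Normal := by
  have htop : H ≤ ⊤ ∧ ⊤ ≤ normalizer (H : Set G) :=
    hsub.induction_top (P := fun K => H ≤ K ∧ K ≤ normalizer (H : Set G))
      ⟨le_rfl, le_normalizer⟩ fun _ _ hKL _ ⟨hHK, hKN⟩ =>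
        ⟨hHK.trans hKL, hSC.le_normalizer_of_normal_subgroupOf hHK hKN hKL⟩
  exact normalizer_eq_top_iff.mp (top_le_iff.mp htop.2)

theorem stmt11 {G : Type*} [Group G] [Finite G] (H : Subgroup G)
    (hSC : StronglyClosed H) (hsub : Subnormal H) : H.Normal :=
  stmt11_general H hSC hsub
end

section
/- Let G be a finite group whose Sylow 2-subgroup is cyclic. Then G is 2-nilpotent. -/
/-! If `|G|` is even then 2 is its smallest prime divisor, and a cyclic Sylow subgroup for the
smallest prime has a normal complement by Burnside's transfer theorem: `N(P) = C(P)`, since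
`N(P)/C(P)` embeds in `Aut P`, whose order `φ(|P|)` has no prime factor below that prime. -/

theorem twoNilpotent_of_odd_card {G : Type*} [Group G] (hG : Odd (Nat.card G)) :
    TwoNilpotent G :=
  ⟨⊤, inferInstance, by rwa [Subgroup.card_top], 0, Subgroup.index_top⟩

theorem twoNilpotent_of_isComplement' {G : Type*} [Group G] [Finite G] {N : Subgroup G}
    [N.Normal] (P : Sylow 2 G) (hNP : N.IsComplement' P) : TwoNilpotent G := by
  obtain ⟨k, hk⟩ := P.2.exists_card_eq
  refine ⟨N, inferInstance, ?_, k, hNP.symm.index_eq_card.trans hk⟩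
  rw [← hNP.index_eq_card, ← Nat.not_even_iff_odd, even_iff_two_dvd]
  exact P.not_dvd_index

theorem stmt14 {G : Type*} [Group G] [Finite G] (P : Sylow 2 G)
    (hcyc : IsCyclic (P : Subgroup G)) : TwoNilpotent G := by
  by_cases hG : Even (Nat.card G)
  · have hmin : (Nat.card G).minFac = 2 := Nat.minFac_eq_two_iff _ |>.mpr hG.two_dvd
    exact twoNilpotent_of_isComplement' P (hcyc.isComplement' hmin)
  · exact twoNilpotent_of_odd_card (Nat.not_even_iff_odd.mp hG)
end

section
/- Let P be a finite 2-group of order at least 8 that has a unique subgroup of order |D| for some fixed order |D| with 2 < |D| < |P|. Then P is cyclic. -/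
open Subgroup

universe u

private lemma card_map_subtype_aux {P : Type u} [Group P] (K : Subgroup P) (L : Subgroup K) :
    Nat.card (L.map K.subtype) = Nat.card L :=
  (Nat.card_congr (Subgroup.equivMapOfInjective L K.subtype K.subtype_injective).toEquiv).symm

private lemma key_aux : ∀ n : ℕ, ∀ (P : Type u) (_ : Group P) (_ : Finite P), Nat.card P = n →
    IsPGroup 2 P → ∀ d : ℕ, (∃ k : ℕ, d = 2 ^ k) → 2 < d → d < Nat.card P →
    (∃! H : Subgroup P, Nat.card H = d) → IsCyclic P := by
  intro n
  induction n using Nat.strong_induction_on with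
  | _ n IH =>
  intro P _ _ hn hP d hd hd2 hdlt huniq
  by_contra hnc
  have fact2 : Fact (Nat.Prime 2) := ⟨Nat.prime_two⟩
  obtain ⟨k, hk⟩ := hd
  obtain ⟨H, hH, hHuniq⟩ := huniq
  obtain ⟨nP, hnP⟩ := hP.exists_card_eq
  have hk2 : 2 ≤ k := by
    by_contra hlt
    push_neg at hlt
    have h1 : (2:ℕ) ^ k ≤ 2 ^ 1 := Nat.pow_le_pow_right (by norm_num) (by omega)
    rw [pow_one] at h1
    omega
  have hdP : d ∣ Nat.card P := by
    have : k ≤ nP := by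
      by_contra hgt
      have : 2 ^ nP ≤ 2 ^ k := Nat.pow_le_pow_right (by norm_num) (by omega)
      omega
    rw [hk, hnP]
    exact pow_dvd_pow 2 this
  -- Step 1 : every subgroup whose card is divisible by d contains H
  have step1 : ∀ K : Subgroup P, d ∣ Nat.card K → H ≤ K := by
    intro K hdvd
    obtain ⟨L, hL⟩ := Sylow.exists_subgroup_card_pow_prime (G := K) 2 (hk ▸ hdvd)
    have hLd : Nat.card (L.map K.subtype) = d := by
      rw [card_map_subtype_aux, hL, hk]
    rw [← hHuniq _ hLd]
    exact map_subtype_le L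
  -- Step 2 : elements outside H generate cyclic subgroups containing H, of order > d
  have step2 : ∀ x : P, x ∉ H → H ≤ zpowers x ∧ d < orderOf x ∧ d ∣ orderOf x := by
    intro x hx
    have hcz : Nat.card (zpowers x) = orderOf x := Nat.card_zpowers x
    have hdvdP : orderOf x ∣ Nat.card P := orderOf_dvd_natCard x
    obtain ⟨j, hjle, hj⟩ := (Nat.dvd_prime_pow Nat.prime_two).mp (hnP ▸ hdvdP)
    rcases le_total k j with hkj | hjk
    · have hddvd : d ∣ orderOf x := by rw [hk, hj]; exact pow_dvd_pow 2 hkj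
      have hle : H ≤ zpowers x := step1 _ (hcz ▸ hddvd)
      have hne : d ≠ orderOf x := by
        intro he
        exact hx ((hHuniq (zpowers x) (by show Nat.card (zpowers x) = d; rw [hcz, he])) ▸ mem_zpowers x)
      have hpos : 0 < orderOf x := by
        rw [hj]; positivity
      exact ⟨hle, lt_of_le_of_ne (Nat.le_of_dvd hpos hddvd) hne, hddvd⟩
    · exfalso
      obtain ⟨K, hKcard, hKle⟩ := Sylow.exists_subgroup_card_pow_prime_le 2 (hk ▸ hdP)
        (zpowers x) (hcz.trans hj) hjk
      have : K = H := hHuniq _ (by show Nat.card K = d; rw [hKcard, hk])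
      exact hx (this ▸ hKle (mem_zpowers x))
  -- elements of maximal order
  obtain ⟨a, ha⟩ := Finite.exists_max (fun x : P => orderOf x)
  set A := zpowers a with hA
  have hcardA : Nat.card A = orderOf a := Nat.card_zpowers a
  -- there is an element outside H
  have hexH : ∃ y : P, y ∉ H := by
    by_contra hy
    push_neg at hy
    have : H = ⊤ := Subgroup.eq_top_iff' H |>.mpr hy
    rw [this, Subgroup.card_top] at hH
    omega
  obtain ⟨y, hy⟩ := hexH
  have haH : a ∉ H := by
    intro haH
    have h1 : zpowers a ≤ H := (zpowers_le).mpr haH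
    have h2 : Nat.card (zpowers a) ≤ Nat.card H := Subgroup.card_le_of_le h1
    have h3 := (step2 y hy).2.1
    have := ha y
    simp only [Nat.card_zpowers] at h2
    omega
  obtain ⟨hHleA, hdm, hddvdm⟩ := step2 a haH
  have hAne : A ≠ ⊤ := by
    intro htop
    refine hnc ⟨⟨a, fun x => ?_⟩⟩
    show x ∈ zpowers a
    rw [← hA, htop]
    trivial
  -- Step 5 : A is a coatom
  have step5 : ∀ K : Subgroup P, A < K → K = ⊤ := by
    intro K hK
    by_contra hKne
    have hcardle : Nat.card K ≤ Nat.card P := by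
      have := Subgroup.card_le_of_le (le_top (a := K))
      rwa [Subgroup.card_top] at this
    have hcardlt : Nat.card K < Nat.card P := by
      rcases lt_or_eq_of_le hcardle with h | h
      · exact h
      · exact absurd (Subgroup.eq_of_le_of_card_ge le_top (by rw [Subgroup.card_top]; omega)) hKne
    have hHleK : H ≤ K := le_trans hHleA (le_of_lt hK)
    have hdK : d < Nat.card K := by
      have h1 : Nat.card A ≤ Nat.card K := Subgroup.card_le_of_le hK.le
      omega
    have huniqK : ∃! L : Subgroup K, Nat.card L = d := by
      refine ⟨H.subgroupOf K, ?_, ?_⟩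
      · show Nat.card (H.subgroupOf K) = d
        rw [show Nat.card (H.subgroupOf K) = Nat.card H from
          Nat.card_congr (Subgroup.subgroupOfEquivOfLe hHleK).toEquiv, hH]
      · intro L hL
        have hmap : L.map K.subtype = H := hHuniq _ (by show Nat.card (L.map K.subtype) = d; rw [card_map_subtype_aux, hL])
        rw [← hmap, ← Subgroup.comap_subtype,
          Subgroup.comap_map_eq_self_of_injective K.subtype_injective]
    have hKcyc : IsCyclic K :=
      IH (Nat.card K) (hn ▸ hcardlt) K inferInstance inferInstance rfl
        (hP.to_subgroup K) d ⟨k, hk⟩ hd2 hdK huniqK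
    obtain ⟨g, hg⟩ := hKcyc
    -- a is a power of g
    have haK : a ∈ K := hK.le (mem_zpowers a)
    have hag : (⟨a, haK⟩ : K) ∈ zpowers g := hg _
    have haP : a ∈ zpowers (g : P) := by
      obtain ⟨i, hi⟩ := hag
      exact ⟨i, by have := congrArg (Subtype.val) hi; simpa using this⟩
    have hAleg : A ≤ zpowers (g : P) := (zpowers_le).mpr haP
    have hcard_g : Nat.card (zpowers (g : P)) ≤ Nat.card A := by
      rw [hcardA, Nat.card_zpowers]
      exact ha g
    have hAeq : A = zpowers (g : P) := Subgroup.eq_of_le_of_card_ge hAleg hcard_g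
    have hKleA : K ≤ A := by
      intro x hx
      obtain ⟨i, hi⟩ := hg ⟨x, hx⟩
      rw [hAeq]
      exact ⟨i, by have := congrArg (Subtype.val) hi; simpa using this⟩
    exact absurd (le_antisymm hKleA hK.le) (ne_of_gt hK)
  have hcoatom : IsCoatom A := ⟨hAne, step5⟩
  have hnilp : Group.IsNilpotent P := hP.isNilpotent
  have hnorm : A.Normal :=
    Subgroup.NormalizerCondition.normal_of_coatom A normalizerCondition_of_isNilpotent hcoatom
  -- choose b of minimal order outside A
  have hexA : ∃ x : P, x ∉ A := by
    by_contra hx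
    push_neg at hx
    exact hAne (Subgroup.eq_top_iff' A |>.mpr hx)
  have : Nonempty {x : P // x ∉ A} := ⟨⟨hexA.choose, hexA.choose_spec⟩⟩
  obtain ⟨⟨b, hbA⟩, hbmin⟩ := Finite.exists_min (fun y : {x : P // x ∉ A} => orderOf y.1)
  simp only at hbmin
  have hb1 : b ≠ 1 := fun h => hbA (h ▸ A.one_mem)
  -- b^2 ∈ A
  have hbord : ∃ e : ℕ, orderOf b = 2 ^ e := by
    obtain ⟨j, _, hj⟩ := (Nat.dvd_prime_pow Nat.prime_two).mp (hnP ▸ orderOf_dvd_natCard b)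
    exact ⟨j, hj⟩
  obtain ⟨e, he⟩ := hbord
  have he1 : 1 ≤ e := by
    rcases Nat.eq_zero_or_pos e with h | h
    · exfalso; rw [h, pow_zero] at he
      exact hb1 (orderOf_eq_one_iff.mp he)
    · exact h
  have hb2A : b ^ 2 ∈ A := by
    by_contra hb2
    have := hbmin ⟨b ^ 2, hb2⟩
    have hord2 : orderOf (b ^ 2) = 2 ^ (e - 1) := by
      have h2 : Nat.gcd (2 ^ e) 2 = 2 := by
        rw [Nat.gcd_comm]
        exact Nat.gcd_eq_left (dvd_pow_self 2 (by omega))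
      rw [orderOf_pow, he, h2, show (2:ℕ) ^ e = 2 ^ (e-1) * 2 by
        rw [← pow_succ]; congr 1; omega, Nat.mul_div_cancel _ (by norm_num)]
    rw [hord2, he] at this
    have : (2:ℕ) ^ (e-1) < 2 ^ e := Nat.pow_lt_pow_right (by norm_num) (by omega)
    omega
  -- facts about b
  have hbH : b ∉ H := fun h => hbA (hHleA h)
  obtain ⟨hHleB, hdbo, -⟩ := step2 b hbH
  set m := orderOf a with hm
  have hmpos : 0 < m := hm ▸ orderOf_pos a
  obtain ⟨q, hq⟩ := hddvdm
  have hqpos : 0 < q := by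
    rcases Nat.eq_zero_or_pos q with h | h
    · exfalso; rw [h, Nat.mul_zero] at hq; omega
    · exact h
  -- the subgroup H is generated by a ^ q
  have horder : orderOf (a ^ q) = d := by
    rw [orderOf_pow, ← hm, Nat.gcd_eq_right ⟨d, by rw [hq]; ring⟩, hq,
      Nat.mul_div_cancel _ hqpos]
  have hzh : zpowers (a ^ q) = H :=
    hHuniq _ (by show Nat.card (zpowers (a ^ q)) = d; rw [Nat.card_zpowers, horder])
  have hhH : a ^ q ∈ H := hzh ▸ mem_zpowers (a ^ q)
  have hcomm : Commute b (a ^ q) := by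
    obtain ⟨i, hi⟩ := Subgroup.mem_zpowers_iff.mp (hHleB hhH)
    exact hi ▸ (Commute.refl b).zpow_right i
  -- conjugation of a by b
  have hconjA : b⁻¹ * a * b ∈ zpowers a := by
    have := hnorm.conj_mem a (by rw [hA]; exact mem_zpowers a) b⁻¹
    rw [hA] at this
    simpa using this
  obtain ⟨r, hr⟩ := Subgroup.mem_zpowers_iff.mp hconjA
  have hconj : ∀ j : ℤ, b⁻¹ * a ^ j * b = a ^ (r * j) := by
    intro j
    have h1 : (b⁻¹ * a * b) ^ j = b⁻¹ * a ^ j * b := by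
      simpa using conj_zpow (i := j) (a := b⁻¹) (b := a)
    rw [← h1, ← hr, ← zpow_mul]
  -- r ≡ 1 mod d
  have hdr : (d : ℤ) ∣ r - 1 := by
    have h1 : b⁻¹ * a ^ (q : ℤ) * b = a ^ (q : ℤ) := by
      rw [zpow_natCast, mul_assoc, ← hcomm.eq, ← mul_assoc, inv_mul_cancel, one_mul]
    have h2 := hconj (q : ℤ)
    rw [h1] at h2
    have h3 : (q : ℤ) ≡ r * q [ZMOD (orderOf a)] := (zpow_eq_zpow_iff_modEq).mp h2
    have h4 : ((orderOf a : ℕ) : ℤ) ∣ r * q - q := Int.ModEq.dvd h3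
    rw [← hm, hq] at h4
    have h5 : ((d : ℤ) * q) ∣ (r - 1) * q := by
      push_cast at h4 ⊢
      calc ((d : ℤ) * q) ∣ r * q - q := h4
        _ = (r - 1) * q := by ring
    have hq0 : (q : ℤ) ≠ 0 := by exact_mod_cast hqpos.ne'
    exact (mul_dvd_mul_iff_right hq0).mp h5
  have h4d : (4 : ℤ) ∣ (d : ℤ) := by
    have : (4 : ℕ) ∣ d := by
      rw [hk, show (4:ℕ) = 2 ^ 2 from rfl]
      exact pow_dvd_pow 2 hk2
    exact_mod_cast this
  obtain ⟨u, hu⟩ := dvd_trans h4d hdr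
  set w : ℤ := 2 * u + 1 with hwdef
  have hw : r + 1 = 2 * w := by rw [hwdef]; omega
  have hwodd : ¬ (2:ℤ) ∣ w := by
    rintro ⟨v, hv⟩; omega
  -- m is a power of two
  obtain ⟨s, -, hs⟩ := (Nat.dvd_prime_pow Nat.prime_two).mp (hnP ▸ orderOf_dvd_natCard a)
  rw [← hm] at hs
  -- b ^ 2 = a ^ t with t even
  rw [hA] at hb2A
  obtain ⟨t, ht⟩ := Subgroup.mem_zpowers_iff.mp hb2A
  have hamz : a ^ ((m:ℤ)) = 1 := by
    rw [zpow_natCast]; exact pow_orderOf_eq_one a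
  have ht2 : (2:ℤ) ∣ t := by
    by_contra hodd
    have hcop : IsCoprime (2:ℤ) t := (Int.prime_two.coprime_iff_not_dvd).mpr hodd
    have hcop2 : IsCoprime ((m:ℤ)) t := by
      rw [hs]; push_cast
      exact hcop.pow_left
    obtain ⟨c, c', hcc⟩ := hcop2
    have haz : a = (b ^ 2) ^ c' := by
      calc a = a ^ (1:ℤ) := (zpow_one a).symm
        _ = a ^ (c * (m:ℤ) + c' * t) := by rw [hcc]
        _ = (a ^ ((m:ℤ))) ^ c * (a ^ t) ^ c' := by
            rw [zpow_add, mul_comm c ((m:ℤ)), mul_comm c' t, zpow_mul, zpow_mul]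
        _ = (b ^ 2) ^ c' := by rw [hamz, one_zpow, one_mul, ht]
    have haB : a ∈ zpowers b := by
      rw [haz]
      exact Subgroup.zpow_mem _ (Subgroup.pow_mem _ (mem_zpowers b) 2) c'
    have hAleB : A ≤ zpowers b := by rw [hA]; exact zpowers_le.mpr haB
    have hcble : Nat.card (zpowers b) ≤ Nat.card A := by
      rw [hcardA, Nat.card_zpowers]
      exact ha b
    have : A = zpowers b := Subgroup.eq_of_le_of_card_ge hAleB hcble
    exact hbA (this ▸ mem_zpowers b)
  obtain ⟨t', ht'⟩ := ht2
  -- inverse of w mod m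
  have hcopw : IsCoprime ((m:ℤ)) w := by
    rw [hs]; push_cast
    exact ((Int.prime_two.coprime_iff_not_dvd).mpr hwodd).pow_left
  obtain ⟨c, w', hcw⟩ := hcopw
  set j : ℤ := -(t' * w') with hjdef
  set x : P := b * a ^ j with hxdef
  -- x is an involution outside A
  have h1 : a ^ j * b = b * a ^ (r * j) := by
    calc a ^ j * b = b * (b⁻¹ * a ^ j * b) := by group
      _ = b * a ^ (r * j) := by rw [hconj j]
  have hexp : t + (r * j + j) = 2 * t' * (c * (m:ℤ)) := by
    rw [hjdef]
    linear_combination ht' + (-(t' * w')) * hw + (-2 * t') * hcw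
  have hx2 : x ^ 2 = 1 := by
    have h2 : x ^ 2 = b ^ 2 * a ^ (r * j + j) := by
      rw [hxdef, pow_two, zpow_add]
      calc b * a ^ j * (b * a ^ j) = b * (a ^ j * b) * a ^ j := by group
        _ = b * (b * a ^ (r * j)) * a ^ j := by rw [h1]
        _ = b ^ 2 * (a ^ (r * j) * a ^ j) := by rw [pow_two]; group
    rw [h2, ← ht, ← zpow_add]
    refine orderOf_dvd_iff_zpow_eq_one.mp ?_
    rw [← hm, hexp]
    exact ⟨2 * t' * c, by ring⟩
  have hxA : x ∉ A := by
    intro hxA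
    apply hbA
    have hb' : b = x * (a ^ j)⁻¹ := by rw [hxdef]; group
    rw [hb']
    exact A.mul_mem hxA (A.inv_mem (A.zpow_mem (by rw [hA]; exact mem_zpowers a) j))
  have hx1 : x ≠ 1 := fun h => hxA (h ▸ A.one_mem)
  have hxord : orderOf x = 2 := orderOf_eq_prime hx2 hx1
  have hxH : x ∉ H := fun h => hxA (hHleA h)
  have := (step2 x hxH).2.1
  omega

theorem stmt18 {P : Type*} [Group P] [Finite P] (hP : IsPGroup 2 P)
    (hcard : 8 ≤ Nat.card P) (d : ℕ) (hd : ∃ k : ℕ, d = 2 ^ k)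
    (hd2 : 2 < d) (hdlt : d < Nat.card P)
    (huniq : ∃! H : Subgroup P, Nat.card H = d) :
    IsCyclic P :=
  key_aux (Nat.card P) P ‹_› ‹_› rfl hP d hd hd2 hdlt huniq
end
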